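/- arXiv:2001.06368 — 7 statements merged into one kernel-verified Lean document; each statement's English description precedes it below -/
import Mathlib

section
/- Let n ∈ ℕ, g' ∈ {0, 1, 2}, and let a₁, …, aₙ be integers with each aᵢ ≥ 2. If ∑ᵢ (1 - 1/aᵢ) = 2 - g' (as rational numbers), then the multiset {a₁, …, aₙ} together with g' is one of: (g' = 2, empty multiset), (g' = 1, {2, 2}), (g' = 0, {2, 2, 2, 2}), (g' = 0, {2, 3, 6}), (g' = 0, {2, 4, 4}), (g' = 0, {3, 3, 3}). -/
/-!
Each term `1 - 1/aᵢ` lies in `[1/2, 1)`, so with `n` exceptional fibres `n/2 ≤ 2 - g' < n`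
(or `n = 0`), and the left inequality is an equality only when every `aᵢ = 2`. In the
equality case `n = 4 - 2g'`, giving the three families `{2, …, 2}`; otherwise integrality
forces `g' = 0` and `n = 3`, where `1/p + 1/q + 1/r = 1` has only the solutions
`(2,3,6)`, `(2,4,4)`, `(3,3,3)` with `p ≤ q ≤ r`: `p ≤ 3` and then `q ≤ 4`.
-/

open Multiset

def conePointDefect (s : Multiset ℤ) : ℚ := (s.map fun a : ℤ => 1 - 1 / (a : ℚ)).sum

section OneSubInv

variable {K : Type*} [Field K] [LinearOrder K] [IsStrictOrderedRing K] {a : K}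

theorem half_le_one_sub_one_div (ha : 2 ≤ a) : 1 / 2 ≤ 1 - 1 / a := by
  have : 1 / a ≤ 1 / 2 := one_div_le_one_div_of_le two_pos ha
  linarith

theorem half_lt_one_sub_one_div (ha : 2 < a) : 1 / 2 < 1 - 1 / a := by
  have : 1 / a < 1 / 2 := one_div_lt_one_div_of_lt two_pos ha
  linarith

end OneSubInv

theorem sum_map_const_half (s : Multiset ℤ) :
    (s.map fun _ => (1 / 2 : ℚ)).sum = card s / 2 := by
  simp [map_const', sum_replicate, div_eq_mul_inv]

theorem card_div_two_le_conePointDefect {s : Multiset ℤ} (hs : ∀ a ∈ s, 2 ≤ a) :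
    (card s : ℚ) / 2 ≤ conePointDefect s := by
  rw [← sum_map_const_half, conePointDefect]
  exact sum_map_le_sum_map _ _ fun a ha => half_le_one_sub_one_div (by exact_mod_cast hs a ha)

theorem eq_replicate_two_of_conePointDefect_eq {s : Multiset ℤ} (hs : ∀ a ∈ s, 2 ≤ a)
    (h : conePointDefect s = card s / 2) : s = replicate (card s) 2 := by
  refine eq_replicate.2 ⟨rfl, fun a ha => ?_⟩
  by_contra hne
  have hlt : (card s : ℚ) / 2 < conePointDefect s := by
    rw [← sum_map_const_half, conePointDefect]
    refine sum_lt_sum (fun b hb => half_le_one_sub_one_div (by exact_mod_cast hs b hb))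
      ⟨a, ha, half_lt_one_sub_one_div ?_⟩
    exact_mod_cast (hs a ha).lt_of_ne' hne
  exact hlt.ne' h

theorem conePointDefect_lt_card {s : Multiset ℤ} (hs : ∀ a ∈ s, 0 < a) (hne : s ≠ 0) :
    conePointDefect s < card s := by
  have hcard : (s.map fun _ => (1 : ℚ)).sum = card s := by simp [map_const', sum_replicate]
  rw [← hcard, conePointDefect]
  refine sum_lt_sum_of_nonempty hne fun a ha => ?_
  have : (0 : ℚ) < a := by exact_mod_cast hs a ha
  simpa using this

theorem conePointDefect_eq_card_sub (s : Multiset ℤ) :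
    conePointDefect s = card s - (s.map fun a : ℤ => 1 / (a : ℚ)).sum := by
  simp [conePointDefect, sum_map_sub, map_const', sum_replicate]

theorem Multiset.exists_sorted_of_card_eq_three {α : Type*} [LinearOrder α] {s : Multiset α}
    (hs : card s = 3) : ∃ p q r, s = {p, q, r} ∧ p ≤ q ∧ q ≤ r := by
  rw [← sort_eq s (· ≤ ·)] at hs ⊢
  have hsorted := pairwise_sort s (· ≤ ·)
  match s.sort (· ≤ ·), hs, hsorted with
  | [p, q, r], _, hsorted =>
    obtain ⟨⟨hpq, -⟩, hqr⟩ : (p ≤ q ∧ p ≤ r) ∧ q ≤ r := by simpa using hsorted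
    exact ⟨p, q, r, rfl, hpq, hqr⟩

theorem Int.eq_of_mul_add_mul_add_mul_eq_mul_mul {p q r : ℤ} (hp : 2 ≤ p) (hpq : p ≤ q)
    (hqr : q ≤ r) (h : q * r + p * r + p * q = p * q * r) :
    p = 2 ∧ q = 3 ∧ r = 6 ∨ p = 2 ∧ q = 4 ∧ r = 4 ∨ p = 3 ∧ q = 3 ∧ r = 3 := by
  have hqr_pos : 0 < q * r := by nlinarith
  -- `p * q * r = q * r + p * r + p * q ≤ 3 * q * r` since `p ≤ q ≤ r`
  have hp3 : p ≤ 3 := by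
    nlinarith [mul_le_mul_of_nonneg_right hpq (by omega : (0 : ℤ) ≤ r),
      mul_le_mul_of_nonneg_left (hpq.trans hqr) (by omega : (0 : ℤ) ≤ q)]
  interval_cases p
  · have hq4 : q ≤ 4 := by nlinarith
    interval_cases q <;> omega
  · have hq3 : q ≤ 3 := by nlinarith
    interval_cases q; omega

theorem eq_of_card_eq_three_of_sum_one_div_eq_one {s : Multiset ℤ} (hcard : card s = 3)
    (hs : ∀ a ∈ s, 2 ≤ a) (h : (s.map fun a : ℤ => 1 / (a : ℚ)).sum = 1) :
    s = {2, 3, 6} ∨ s = {2, 4, 4} ∨ s = {3, 3, 3} := by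
  obtain ⟨p, q, r, rfl, hpq, hqr⟩ := exists_sorted_of_card_eq_three hcard
  have hp : 2 ≤ p := hs p (by simp)
  have hp0 : (p : ℚ) ≠ 0 := by norm_cast; omega
  have hq0 : (q : ℚ) ≠ 0 := by norm_cast; omega
  have hr0 : (r : ℚ) ≠ 0 := by norm_cast; omega
  have hint : q * r + p * r + p * q = p * q * r := by
    simp only [insert_eq_cons, map_cons, map_singleton, sum_cons, sum_singleton] at h
    field_simp at h
    have hcast : ((q * r + p * r + p * q : ℤ) : ℚ) = (p * q * r : ℤ) := by
      push_cast
      linear_combination h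
    exact_mod_cast hcast
  rcases Int.eq_of_mul_add_mul_add_mul_eq_mul_mul hp hpq hqr hint with
    ⟨rfl, rfl, rfl⟩ | ⟨rfl, rfl, rfl⟩ | ⟨rfl, rfl, rfl⟩ <;> simp

theorem nil_seifert_classification_general (n : ℕ) (g' : ℕ)
    (a : Fin n → ℤ) (ha : ∀ i, 2 ≤ a i)
    (h : ∑ i, (1 - 1 / (a i : ℚ)) = 2 - (g' : ℚ)) :
    (g' = 2 ∧ Finset.univ.val.map a = 0) ∨
    (g' = 1 ∧ Finset.univ.val.map a = {2, 2}) ∨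
    (g' = 0 ∧ Finset.univ.val.map a = {2, 2, 2, 2}) ∨
    (g' = 0 ∧ Finset.univ.val.map a = {2, 3, 6}) ∨
    (g' = 0 ∧ Finset.univ.val.map a = {2, 4, 4}) ∨
    (g' = 0 ∧ Finset.univ.val.map a = {3, 3, 3}) := by
  set s := Finset.univ.val.map a
  have hs : ∀ x ∈ s, 2 ≤ x := by simpa [s] using ha
  have hdefect : conePointDefect s = 2 - g' := by
    rw [← h, Finset.sum_eq_multiset_sum, conePointDefect, map_map]
    rfl
  rcases (card_div_two_le_conePointDefect hs).eq_or_lt with heq | hlt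
  · have hcard : card s + 2 * g' = 4 := by
      rw [hdefect] at heq
      exact_mod_cast (by linarith : (card s : ℚ) + 2 * g' = 4)
    rw [eq_replicate_two_of_conePointDefect_eq hs heq.symm]
    obtain ⟨hc, rfl⟩ | ⟨hc, rfl⟩ | ⟨hc, rfl⟩ :
        card s = 0 ∧ g' = 2 ∨ card s = 2 ∧ g' = 1 ∨ card s = 4 ∧ g' = 0 := by omega
    all_goals simp [hc]
  · have hne : s ≠ 0 := by
      rintro hs0
      simp [hs0, conePointDefect] at hlt
    have hupper := conePointDefect_lt_card (fun x hx => by linarith [hs x hx]) hne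
    obtain ⟨hcard, rfl⟩ : card s = 3 ∧ g' = 0 := by
      rw [hdefect] at hlt hupper
      have h1 : card s + 2 * g' < 4 := by
        exact_mod_cast (by linarith : (card s : ℚ) + 2 * g' < 4)
      have h2 : 2 < card s + g' := by
        exact_mod_cast (by linarith : (2 : ℚ) < card s + g')
      omega
    have hinv : (s.map fun a : ℤ => 1 / (a : ℚ)).sum = 1 := by
      rw [conePointDefect_eq_card_sub, hcard] at hdefect
      push_cast at hdefect
      linarith
    rcases eq_of_card_eq_three_of_sum_one_div_eq_one hcard hs hinv with h' | h' | h' <;> simp [h']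

/-- Classification of the possible Seifert invariants of closed orientable
3-manifolds with Nil geometry: if `g' ∈ {0,1,2}`, each `aᵢ ≥ 2` and
`∑ᵢ (1 - 1/aᵢ) = 2 - g'` (in `ℚ`), then `(g', {a₁,…,aₙ})` is one of the six
listed possibilities. -/
theorem nil_seifert_classification (n : ℕ) (g' : ℕ) (hg : g' ≤ 2)
    (a : Fin n → ℤ) (ha : ∀ i, 2 ≤ a i)
    (h : ∑ i, (1 - 1 / (a i : ℚ)) = 2 - (g' : ℚ)) :
    (g' = 2 ∧ Finset.univ.val.map a = 0) ∨
    (g' = 1 ∧ Finset.univ.val.map a = {2, 2}) ∨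
    (g' = 0 ∧ Finset.univ.val.map a = {2, 2, 2, 2}) ∨
    (g' = 0 ∧ Finset.univ.val.map a = {2, 3, 6}) ∨
    (g' = 0 ∧ Finset.univ.val.map a = {2, 4, 4}) ∨
    (g' = 0 ∧ Finset.univ.val.map a = {3, 3, 3}) :=
  nil_seifert_classification_general n g' a ha h
end

section
/- Let b be an odd positive integer and let G be the group with presentation ⟨v₁, v₂, h | v₁hv₁⁻¹h, v₂hv₂⁻¹h, v₁²v₂²h^{-b}⟩. Then the abelianization of G is isomorphic to ℤ ⊕ ℤ/4, where the ℤ factor is generated by the image of v₁, the ℤ/4 factor is generated by the image of v₁v₂, and the image of h equals twice the image of v₁v₂. -/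
/-!
In the abelianization the first two relations both say `h² = 1`, so for odd `b` the third says
`(v₁v₂)² = h^b = h`. Hence `v₁v₂` has order dividing 4, and `v₁`, `v₁v₂` generate. Conversely
`v₁ ↦ (1, 0)`, `v₂ ↦ (-1, 1)`, `h ↦ (0, 2)` respects the relations because `2 - 2b ≡ 0 mod 4`,
and it is inverse to `(m, j) ↦ v₁^m (v₁v₂)^j`.
-/

/-- Relations of the fundamental group of `M_K(b)`:
generators `v₁ = 0`, `v₂ = 1`, `h = 2`;
relations `v₁hv₁⁻¹h`, `v₂hv₂⁻¹h`, `v₁²v₂²h^{-b}`. -/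
def relsK (b : ℤ) : Set (FreeGroup (Fin 3)) :=
  { .of 0 * .of 2 * (.of 0)⁻¹ * .of 2,
    .of 1 * .of 2 * (.of 1)⁻¹ * .of 2,
    .of 0 * .of 0 * .of 1 * .of 1 * (.of 2) ^ (-b) }

theorem zpow_eq_self_of_sq_eq_one {G : Type*} [Group G] {z : G} (hz : z ^ 2 = 1) {n : ℤ}
    (hn : Odd n) : z ^ n = z := by
  obtain ⟨k, rfl⟩ := hn
  rw [zpow_add_one, zpow_mul, zpow_ofNat, hz, one_zpow, one_mul]

section IntProdZMod

variable {M : Type*} [CommGroup M] {n : ℕ}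

def intProdZModLift (x w : M) (hw : w ^ n = 1) : Multiplicative (ℤ × ZMod n) →* M :=
  AddMonoidHom.toMultiplicativeLeft <| (zmultiplesHom _ (Additive.ofMul x)).coprod <|
    ZMod.lift n ⟨zmultiplesHom _ (Additive.ofMul w), by simp [← ofMul_pow, hw]⟩

theorem intProdZModLift_ofAdd (x w : M) (hw : w ^ n = 1) (m j : ℤ) :
    intProdZModLift x w hw (Multiplicative.ofAdd (m, j)) = x ^ m * w ^ j := by
  simp [intProdZModLift]

end IntProdZMod

namespace MK

variable {b : ℤ}

abbrev AbK (b : ℤ) : Type := Abelianization (PresentedGroup (relsK b))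

def π (b : ℤ) : FreeGroup (Fin 3) →* AbK b := Abelianization.of.comp (PresentedGroup.mk _)

theorem π_eq_one_of_mem {r : FreeGroup (Fin 3)} (hr : r ∈ relsK b) : π b r = 1 := by
  simp [π, PresentedGroup.one_of_mem hr]

theorem π_h_sq : π b (.of 2) ^ 2 = 1 := by
  have h := π_eq_one_of_mem (b := b) (Set.mem_insert _ _)
  simpa [mul_comm _ (π b (.of 2)), sq] using h

theorem π_v₁v₂_sq (hb : Odd b) : π b (.of 0 * .of 1) ^ 2 = π b (.of 2) := by
  have h := π_eq_one_of_mem (b := b) (Set.mem_insert_of_mem _ (Set.mem_insert_of_mem _ rfl))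
  calc π b (.of 0 * .of 1) ^ 2 = π b (.of 0) * π b (.of 0) * π b (.of 1) * π b (.of 1) := by
        rw [map_mul, sq, mul_mul_mul_comm, ← mul_assoc]
    _ = π b (.of 2) ^ b := mul_inv_eq_one.mp (by simpa [zpow_neg] using h)
    _ = π b (.of 2) := zpow_eq_self_of_sq_eq_one π_h_sq hb

theorem π_v₁v₂_pow_four (hb : Odd b) : π b (.of 0 * .of 1) ^ 4 = 1 := by
  rw [show 4 = 2 * 2 from rfl, pow_mul, π_v₁v₂_sq hb, π_h_sq]

def genImage : Fin 3 → Multiplicative (ℤ × ZMod 4) :=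
  ![.ofAdd (1, 0), .ofAdd (-1, 1), .ofAdd (0, 2)]

theorem lift_genImage_eq_one (hb : Odd b) : ∀ r ∈ relsK b, FreeGroup.lift genImage r = 1 := by
  have h4 : (2 + 2 : ZMod 4) = 0 := rfl
  have hb2 : (b : ZMod 4) * 2 = 2 := by
    obtain ⟨k, rfl⟩ := hb
    push_cast
    linear_combination (k : ZMod 4) * h4
  rintro r (rfl | rfl | rfl) <;>
    simp [genImage, ← ofAdd_add, ← ofAdd_neg, ← ofAdd_zsmul, Prod.ext_iff, one_add_one_eq_two,
      h4, hb2]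

def toIntProdZMod (hb : Odd b) : AbK b →* Multiplicative (ℤ × ZMod 4) :=
  Abelianization.lift (PresentedGroup.toGroup (lift_genImage_eq_one hb))

theorem toIntProdZMod_π_of (hb : Odd b) (i : Fin 3) :
    toIntProdZMod hb (π b (.of i)) = genImage i :=
  PresentedGroup.toGroup.of (lift_genImage_eq_one hb)

def ofIntProdZMod (hb : Odd b) : Multiplicative (ℤ × ZMod 4) →* AbK b :=
  intProdZModLift (π b (.of 0)) (π b (.of 0 * .of 1)) (π_v₁v₂_pow_four hb)

theorem ofIntProdZMod_ofAdd (hb : Odd b) (m j : ℤ) :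
    ofIntProdZMod hb (.ofAdd (m, j)) = π b (.of 0) ^ m * π b (.of 0 * .of 1) ^ j :=
  intProdZModLift_ofAdd _ _ _ m j

theorem ofIntProdZMod_comp_toIntProdZMod (hb : Odd b) :
    (ofIntProdZMod hb).comp (toIntProdZMod hb) = .id _ := by
  refine Abelianization.hom_ext _ _ (PresentedGroup.ext fun i => ?_)
  change ofIntProdZMod hb (toIntProdZMod hb (π b (.of i))) = π b (.of i)
  rw [toIntProdZMod_π_of]
  fin_cases i
  · simpa [genImage] using ofIntProdZMod_ofAdd hb 1 0
  · simpa [genImage] using ofIntProdZMod_ofAdd hb (-1) 1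
  · simpa [genImage, ← π_v₁v₂_sq hb] using ofIntProdZMod_ofAdd hb 0 2

theorem toIntProdZMod_comp_ofIntProdZMod (hb : Odd b) :
    (toIntProdZMod hb).comp (ofIntProdZMod hb) = .id _ := by
  refine MonoidHom.ext fun ⟨m, j⟩ => ?_
  obtain ⟨j, rfl⟩ := ZMod.intCast_surjective j
  change toIntProdZMod hb (ofIntProdZMod hb (.ofAdd (m, j))) = .ofAdd (m, j)
  simp [ofIntProdZMod_ofAdd, toIntProdZMod_π_of, genImage, ← ofAdd_add, ← ofAdd_zsmul]

end MK

open MK in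
theorem abelianization_MK_odd_general (b : ℕ) (hodd : Odd b) :
    ∃ e : Abelianization (PresentedGroup (relsK b)) ≃* Multiplicative (ℤ × ZMod 4),
      e (Abelianization.of (PresentedGroup.of 0)) = Multiplicative.ofAdd (1, 0) ∧
      e (Abelianization.of (PresentedGroup.of 0 * PresentedGroup.of 1)) =
        Multiplicative.ofAdd (0, 1) ∧
      e (Abelianization.of (PresentedGroup.of 2)) = Multiplicative.ofAdd (0, 2) := by
  have hb : Odd (b : ℤ) := (Int.odd_coe_nat b).mpr hodd
  refine ⟨(toIntProdZMod hb).toMulEquiv (ofIntProdZMod hb)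
    (ofIntProdZMod_comp_toIntProdZMod hb) (toIntProdZMod_comp_ofIntProdZMod hb),
    toIntProdZMod_π_of hb 0, ?_, toIntProdZMod_π_of hb 2⟩
  change toIntProdZMod hb (π b (.of 0 * .of 1)) = _
  simp [toIntProdZMod_π_of, genImage, ← ofAdd_add]

theorem abelianization_MK_odd (b : ℕ) (hb : 0 < b) (hodd : Odd b) :
    ∃ e : Abelianization (PresentedGroup (relsK b)) ≃* Multiplicative (ℤ × ZMod 4),
      e (Abelianization.of (PresentedGroup.of 0)) = Multiplicative.ofAdd (1, 0) ∧
      e (Abelianization.of (PresentedGroup.of 0 * PresentedGroup.of 1)) =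
        Multiplicative.ofAdd (0, 1) ∧
      e (Abelianization.of (PresentedGroup.of 2)) = Multiplicative.ofAdd (0, 2) :=
  abelianization_MK_odd_general b hodd
end

section
/- Let b be an even positive integer and let G be the group with presentation ⟨v₁, v₂, h | v₁hv₁⁻¹h, v₂hv₂⁻¹h, v₁²v₂²h^{-b}⟩. Then the abelianization of G is isomorphic to ℤ ⊕ ℤ/2 ⊕ ℤ/2, generated respectively by the images of v₁, v₁v₂, and h. -/
section IntZModZMod

variable {m k : ℕ}

section Lift

variable {A : Type*} [CommGroup A] (x u z : A) (hu : u ^ m = 1) (hz : z ^ k = 1)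

def liftIntZModZMod : Multiplicative (ℤ × ZMod m × ZMod k) →* A :=
  AddMonoidHom.toMultiplicativeLeft <|
    (zmultiplesHom _ (Additive.ofMul x)).coprod <|
      (ZMod.lift m ⟨zmultiplesHom _ (Additive.ofMul u), by simp [← ofMul_pow, hu]⟩).coprod
        (ZMod.lift k ⟨zmultiplesHom _ (Additive.ofMul z), by simp [← ofMul_pow, hz]⟩)

theorem liftIntZModZMod_ofAdd (n i j : ℤ) :
    liftIntZModZMod x u z hu hz (.ofAdd (n, i, j)) = x ^ n * u ^ i * z ^ j := by
  simp [liftIntZModZMod, ZMod.lift_coe, mul_assoc]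

@[simp]
theorem liftIntZModZMod_ofAdd_one_zero_zero :
    liftIntZModZMod x u z hu hz (.ofAdd (1, 0, 0)) = x := by
  simpa using liftIntZModZMod_ofAdd x u z hu hz 1 0 0

@[simp]
theorem liftIntZModZMod_ofAdd_zero_one_zero :
    liftIntZModZMod x u z hu hz (.ofAdd (0, 1, 0)) = u := by
  simpa using liftIntZModZMod_ofAdd x u z hu hz 0 1 0

@[simp]
theorem liftIntZModZMod_ofAdd_zero_zero_one :
    liftIntZModZMod x u z hu hz (.ofAdd (0, 0, 1)) = z := by
  simpa using liftIntZModZMod_ofAdd x u z hu hz 0 0 1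

end Lift

theorem hom_ext_intZModZMod {G : Type*} [Group G]
    {f g : Multiplicative (ℤ × ZMod m × ZMod k) →* G}
    (h₁ : f (.ofAdd (1, 0, 0)) = g (.ofAdd (1, 0, 0)))
    (h₂ : f (.ofAdd (0, 1, 0)) = g (.ofAdd (0, 1, 0)))
    (h₃ : f (.ofAdd (0, 0, 1)) = g (.ofAdd (0, 0, 1))) : f = g := by
  refine MonoidHom.ext fun p ↦ ?_
  obtain ⟨⟨n, a, c⟩, rfl⟩ := Multiplicative.ofAdd.surjective p
  obtain ⟨i, rfl⟩ := ZMod.intCast_surjective a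
  obtain ⟨j, rfl⟩ := ZMod.intCast_surjective c
  have : Multiplicative.ofAdd ((n, i, j) : ℤ × ZMod m × ZMod k) =
      .ofAdd (1, 0, 0) ^ n * .ofAdd (0, 1, 0) ^ i * .ofAdd (0, 0, 1) ^ j := by
    simp [← ofAdd_zsmul, ← ofAdd_add]
  simp only [this, map_mul, map_zpow, h₁, h₂, h₃]

end IntZModZMod

namespace relsK

variable (b : ℤ)

abbrev gen (i : Fin 3) : Abelianization (PresentedGroup (relsK b)) :=
  Abelianization.of (PresentedGroup.of i)

theorem of_mk_of (i : Fin 3) :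
    Abelianization.of (PresentedGroup.mk (relsK b) (.of i)) = gen b i :=
  rfl

theorem gen_two_sq : gen b 2 ^ 2 = 1 := by
  have h : gen b 0 * gen b 2 * (gen b 0)⁻¹ * gen b 2 = 1 := by
    simpa only [map_mul, map_inv, map_one, of_mk_of] using congrArg Abelianization.of <|
      PresentedGroup.one_of_mem (rels := relsK b) (Set.mem_insert _ _)
  rwa [mul_inv_cancel_comm, ← sq] at h

variable {b}

theorem gen_zero_mul_gen_one_sq (hb : Even b) : (gen b 0 * gen b 1) ^ 2 = 1 := by
  have h : gen b 0 * gen b 0 * gen b 1 * gen b 1 * gen b 2 ^ (-b) = 1 := by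
    simpa only [map_mul, map_zpow, map_one, of_mk_of] using congrArg Abelianization.of <|
      PresentedGroup.one_of_mem (rels := relsK b)
        (Set.mem_insert_of_mem _ (Set.mem_insert_of_mem _ rfl))
  have hz : gen b 2 ^ (-b) = 1 := by
    rw [← orderOf_dvd_iff_zpow_eq_one]
    exact (Int.natCast_dvd_natCast.mpr (orderOf_dvd_of_pow_eq_one (gen_two_sq b))).trans
      hb.neg.two_dvd
  rwa [hz, mul_one, mul_assoc _ (gen b 1), ← sq, ← sq, ← mul_pow] at h

def toProd (hb : Even b) :
    Abelianization (PresentedGroup (relsK b)) →* Multiplicative (ℤ × ZMod 2 × ZMod 2) :=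
  Abelianization.lift <| PresentedGroup.toGroup
    (f := ![.ofAdd (1, 0, 0), .ofAdd (-1, 1, 0), .ofAdd (0, 0, 1)]) <| by
      have hb2 : (b : ZMod 2) = 0 := (ZMod.intCast_zmod_eq_zero_iff_dvd _ 2).mpr hb.two_dvd
      rintro r (rfl | rfl | rfl) <;>
        simp [← ofAdd_zsmul, ← ofAdd_add, ← ofAdd_neg, Prod.ext_iff, hb2] <;> decide

@[simp]
theorem toProd_gen (hb : Even b) (i : Fin 3) :
    toProd hb (gen b i) = ![.ofAdd (1, 0, 0), .ofAdd (-1, 1, 0), .ofAdd (0, 0, 1)] i := by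
  simp [toProd, PresentedGroup.toGroup.of]

def ofProd (hb : Even b) :
    Multiplicative (ℤ × ZMod 2 × ZMod 2) →* Abelianization (PresentedGroup (relsK b)) :=
  liftIntZModZMod (gen b 0) (gen b 0 * gen b 1) (gen b 2) (gen_zero_mul_gen_one_sq hb)
    (gen_two_sq b)

theorem ofProd_toProd_gen (hb : Even b) (i : Fin 3) :
    ofProd hb (toProd hb (gen b i)) = gen b i := by
  fin_cases i
  · simp [ofProd]
  · have : (Multiplicative.ofAdd (-1, 1, 0) : Multiplicative (ℤ × ZMod 2 × ZMod 2)) =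
        .ofAdd (-1, ((1 : ℤ) : ZMod 2), ((0 : ℤ) : ZMod 2)) := by simp
    simp [this, ofProd, liftIntZModZMod_ofAdd]
  · simp [ofProd]

def abelianizationEquiv (hb : Even b) :
    Abelianization (PresentedGroup (relsK b)) ≃* Multiplicative (ℤ × ZMod 2 × ZMod 2) :=
  (toProd hb).toMulEquiv (ofProd hb)
    (Abelianization.hom_ext _ _ <| PresentedGroup.ext fun i ↦ ofProd_toProd_gen hb i)
    (hom_ext_intZModZMod (by simp [ofProd]) (by simp [ofProd, ← ofAdd_add]) (by simp [ofProd]))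

end relsK

theorem abelianization_MK_even_general (b : ℕ) (heven : Even b) :
    ∃ e : Abelianization (PresentedGroup (relsK b)) ≃* Multiplicative (ℤ × ZMod 2 × ZMod 2),
      e (Abelianization.of (PresentedGroup.of 0)) = Multiplicative.ofAdd (1, 0, 0) ∧
      e (Abelianization.of (PresentedGroup.of 0 * PresentedGroup.of 1)) =
        Multiplicative.ofAdd (0, 1, 0) ∧
      e (Abelianization.of (PresentedGroup.of 2)) = Multiplicative.ofAdd (0, 0, 1) := by
  refine ⟨relsK.abelianizationEquiv ((Int.even_coe_nat b).mpr heven), ?_, ?_, ?_⟩ <;>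
    simp [relsK.abelianizationEquiv, ← ofAdd_add]

theorem abelianization_MK_even (b : ℕ) (hb : 0 < b) (heven : Even b) :
    ∃ e : Abelianization (PresentedGroup (relsK b)) ≃* Multiplicative (ℤ × ZMod 2 × ZMod 2),
      e (Abelianization.of (PresentedGroup.of 0)) = Multiplicative.ofAdd (1, 0, 0) ∧
      e (Abelianization.of (PresentedGroup.of 0 * PresentedGroup.of 1)) =
        Multiplicative.ofAdd (0, 1, 0) ∧
      e (Abelianization.of (PresentedGroup.of 2)) = Multiplicative.ofAdd (0, 0, 1) :=
  abelianization_MK_even_general b heven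
end

section
/- Let b ∈ ℕ and let G be the group with presentation ⟨s₁, s₂, v₁, h | [s₁,h], [s₂,h], s₁²h, s₂²h, v₁hv₁⁻¹h, s₁s₂v₁²h^{-b}⟩. Then the abelianization of G is isomorphic to ℤ/4 ⊕ ℤ/4, generated by the images of v₁ and s₁; moreover in the abelianization the image of h equals −2·s₁ and the image of s₂ equals −(2b+1)·s₁ − 2·v₁. -/
/-!
In the abelianization the two commutator relators become trivial and the others become the
linear relations `2s₁ + h = 0`, `2s₂ + h = 0`, `2h = 0` and `s₁ + s₂ + 2v₁ - b h = 0`.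
They eliminate `h = -2s₁` and `s₂ = -2v₁ - (2b+1)s₁` and force `4s₁ = 4v₁ = 0`, so `v₁` and `s₁`
generate a quotient of `ℤ/4 × ℤ/4`. Conversely `v₁ ↦ (1,0)`, `s₁ ↦ (0,1)`, `h ↦ (0,-2)`,
`s₂ ↦ (-2, -(2b+1))` kills every relator, and the two maps are mutually inverse.
-/

/-- Relations of the fundamental group of `M_22(b)`:
generators `s₁ = 0`, `s₂ = 1`, `v₁ = 2`, `h = 3`;
relations `[s₁,h]`, `[s₂,h]`, `s₁²h`, `s₂²h`, `v₁hv₁⁻¹h`, `s₁s₂v₁²h^{-b}`. -/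
def rels22 (b : ℤ) : Set (FreeGroup (Fin 4)) :=
  { .of 0 * .of 3 * (.of 0)⁻¹ * (.of 3)⁻¹,
    .of 1 * .of 3 * (.of 1)⁻¹ * (.of 3)⁻¹,
    .of 0 * .of 0 * .of 3,
    .of 1 * .of 1 * .of 3,
    .of 2 * .of 3 * (.of 2)⁻¹ * .of 3,
    .of 0 * .of 1 * .of 2 * .of 2 * (.of 3) ^ (-b) }

theorem PresentedGroup.ofMul_of_mk_eq_zero {α : Type*} {rels : Set (FreeGroup α)}
    {r : FreeGroup α} (hr : r ∈ rels) :
    Additive.ofMul (Abelianization.of (PresentedGroup.mk rels r)) = 0 := by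
  rw [PresentedGroup.one_of_mem hr, map_one, ofMul_one]

namespace M22

variable (b : ℕ)

abbrev Ab := Additive (Abelianization (PresentedGroup (rels22 b)))

def gen (i : Fin 4) : Ab b := Additive.ofMul (Abelianization.of (PresentedGroup.of i))

@[simp]
theorem ofMul_of_mk_of (i : Fin 4) :
    Additive.ofMul (Abelianization.of (PresentedGroup.mk (rels22 b) (.of i))) = gen b i := rfl

theorem linear_relations :
    2 • gen b 0 + gen b 3 = 0 ∧ 2 • gen b 1 + gen b 3 = 0 ∧ 2 • gen b 3 = 0 ∧
      gen b 0 + gen b 1 + 2 • gen b 2 - (b : ℤ) • gen b 3 = 0 := by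
  have rel (r : FreeGroup (Fin 4)) (hr : r ∈ rels22 b) :=
    PresentedGroup.ofMul_of_mk_eq_zero hr
  have h₁ := rel (.of 0 * .of 0 * .of 3) (by simp [rels22])
  have h₂ := rel (.of 1 * .of 1 * .of 3) (by simp [rels22])
  have h₃ := rel (.of 2 * .of 3 * (.of 2)⁻¹ * .of 3) (by simp [rels22])
  have h₄ := rel (.of 0 * .of 1 * .of 2 * .of 2 * .of 3 ^ (-(b : ℤ))) (by simp [rels22])
  simp only [map_mul, map_inv, map_zpow, ofMul_mul, ofMul_inv, ofMul_zpow, ofMul_of_mk_of]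
    at h₁ h₂ h₃ h₄
  exact ⟨by linear_combination (norm := module) h₁, by linear_combination (norm := module) h₂,
    by linear_combination (norm := module) h₃, by linear_combination (norm := module) h₄⟩

theorem gen_three_eq : gen b 3 = -2 • gen b 0 := by
  obtain ⟨h₁, -, -, -⟩ := linear_relations b
  linear_combination (norm := module) h₁

theorem gen_one_eq : gen b 1 = (-2 : ℤ) • gen b 2 + (-(2 * b + 1) : ℤ) • gen b 0 := by
  obtain ⟨h₁, -, -, h₄⟩ := linear_relations b
  linear_combination (norm := module) h₄ + (b : ℤ) • h₁

theorem four_smul_gen_zero : (4 : ℤ) • gen b 0 = 0 := by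
  obtain ⟨h₁, -, h₃, -⟩ := linear_relations b
  linear_combination (norm := module) 2 • h₁ - h₃

theorem four_smul_gen_two : (4 : ℤ) • gen b 2 = 0 := by
  obtain ⟨h₁, h₂, h₃, h₄⟩ := linear_relations b
  linear_combination (norm := module) 2 • h₄ - h₁ - h₂ + ((b : ℤ) + 1) • h₃

def genImage : Fin 4 → ZMod 4 × ZMod 4 :=
  ![(0, 1), (-2, -(2 * b + 1)), (1, 0), (0, -2)]

theorem lift_genImage_eq_one :
    ∀ r ∈ rels22 b, FreeGroup.lift (Multiplicative.ofAdd ∘ genImage b) r = 1 := by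
  intro r hr
  apply Multiplicative.toAdd.injective
  simp only [rels22, Set.mem_insert_iff, Set.mem_singleton_iff] at hr
  -- what remains are identities in `ZMod 4` depending on `b` only through its residue
  rcases hr with rfl | rfl | rfl | rfl | rfl | rfl <;> simp [genImage] <;>
    generalize (b : ZMod 4) = c <;> revert c <;> decide

def toZMod : Ab b →+ ZMod 4 × ZMod 4 :=
  MonoidHom.toAdditiveLeft (Abelianization.lift (PresentedGroup.toGroup (lift_genImage_eq_one b)))

@[simp]
theorem toZMod_gen (i : Fin 4) : toZMod b (gen b i) = genImage b i := by
  simp [toZMod, gen]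

def ofZMod : ZMod 4 × ZMod 4 →+ Ab b :=
  (ZMod.lift 4 ⟨zmultiplesHom _ (gen b 2), by simpa using four_smul_gen_two b⟩).coprod
    (ZMod.lift 4 ⟨zmultiplesHom _ (gen b 0), by simpa using four_smul_gen_zero b⟩)

@[simp]
theorem ofZMod_intCast (k l : ℤ) :
    ofZMod b ((k : ZMod 4), (l : ZMod 4)) = k • gen b 2 + l • gen b 0 := by
  simp [ofZMod]

theorem ofZMod_toZMod_gen : ∀ i : Fin 4, ofZMod b (toZMod b (gen b i)) = gen b i
  | 0 => by simpa [genImage] using ofZMod_intCast b 0 1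
  | 1 => by
    rw [toZMod_gen, gen_one_eq, ← ofZMod_intCast]
    simp [genImage]
  | 2 => by simpa [genImage] using ofZMod_intCast b 1 0
  | 3 => by
    rw [toZMod_gen, gen_three_eq, ← zero_add (_ • gen b 0), ← zero_smul ℤ (gen b 2),
      ← ofZMod_intCast]
    simp [genImage]

theorem toZMod_ofZMod (x : ZMod 4 × ZMod 4) : toZMod b (ofZMod b x) = x := by
  obtain ⟨k, hk⟩ := ZMod.intCast_surjective x.1
  obtain ⟨l, hl⟩ := ZMod.intCast_surjective x.2
  rw [← Prod.mk.eta (p := x), ← hk, ← hl]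
  simp [genImage]

def equivZMod : Ab b ≃+ ZMod 4 × ZMod 4 :=
  (toZMod b).toAddEquiv (ofZMod b) (by ext i; exact ofZMod_toZMod_gen b i)
    (AddMonoidHom.ext (toZMod_ofZMod b))

end M22

theorem abelianization_M22 (b : ℕ) :
    ∃ e : Abelianization (PresentedGroup (rels22 b)) ≃* Multiplicative (ZMod 4 × ZMod 4),
      e (Abelianization.of (PresentedGroup.of 2)) = Multiplicative.ofAdd (1, 0) ∧
      e (Abelianization.of (PresentedGroup.of 0)) = Multiplicative.ofAdd (0, 1) ∧
      e (Abelianization.of (PresentedGroup.of 3)) = Multiplicative.ofAdd (0, -2) ∧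
      e (Abelianization.of (PresentedGroup.of 1)) =
        Multiplicative.ofAdd (-2, -(2 * (b : ZMod 4) + 1)) :=
  ⟨AddEquiv.toMultiplicativeRight (M22.equivZMod b), M22.toZMod_gen b 2, M22.toZMod_gen b 0,
    M22.toZMod_gen b 3, M22.toZMod_gen b 1⟩
end

section
/- Let b ≥ −1 be an integer and let G be the group with presentation ⟨s₁, s₂, s₃, s₄, h | [sᵢ,h] and sᵢ²h for i = 1,…,4, s₁s₂s₃s₄h^{-b}⟩. Then the abelianization of G is isomorphic to ℤ/2 ⊕ ℤ/2 ⊕ ℤ/(4(b+2)), generated respectively by the images of s₂s₁⁻¹, s₃s₁⁻¹, and s₁. -/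
/-!
Write the abelianization additively, with `sᵢ ↦ gᵢ` and `h ↦ k`. The relators say
`2gᵢ + k = 0` and `g₁ + g₂ + g₃ + g₄ = b k`, so `x = g₂ - g₁` and `y = g₃ - g₁`
are killed by `2`, `k = -2 g₁`, `g₄ = x + y - (2b + 3) g₁`, and twice the last relator gives
`4(b + 2) g₁ = 0`. Hence `x, y, g₁` generate, and conversely these formulas define a point
of `ℤ/2 × ℤ/2 × ℤ/4(b+2)` satisfying the relators, which gives the inverse map.
-/

/-- Relations of the fundamental group of `M_2222(b)`:
generators `s₁ = 0`, …, `s₄ = 3`, `h = 4`;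
relations `[sᵢ,h]`, `sᵢ²h` (`i = 1,…,4`), `s₁s₂s₃s₄h^{-b}`. -/
def rels2222 (b : ℤ) : Set (FreeGroup (Fin 5)) :=
  { r | (∃ i : Fin 4, r = .of i.castSucc * .of 4 * (.of i.castSucc)⁻¹ * (.of 4)⁻¹) ∨
        (∃ i : Fin 4, r = .of i.castSucc * .of i.castSucc * .of 4) ∨
        r = .of 0 * .of 1 * .of 2 * .of 3 * (.of 4) ^ (-b) }

theorem ZMod.intCast_self_toNat {m : ℤ} (hm : 0 ≤ m) : ((m : ℤ) : ZMod m.toNat) = 0 := by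
  rw [← ZMod.natCast_toNat _ hm, ZMod.natCast_self]

def ZMod.zmultiplesHom {M : Type*} [AddCommGroup M] (n : ℕ) (m : M)
    (h : (n : ℤ) • m = 0) : ZMod n →+ M :=
  ZMod.lift n ⟨_root_.zmultiplesHom M m, h⟩

theorem ZMod.zmultiplesHom_one {M : Type*} [AddCommGroup M] {n : ℕ} {m : M}
    (h : (n : ℤ) • m = 0) : ZMod.zmultiplesHom n m h 1 = m := by
  simpa [ZMod.zmultiplesHom] using ZMod.lift_coe n ⟨_root_.zmultiplesHom M m, h⟩ 1

namespace PresentedGroup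

variable {α : Type*} {rels : Set (FreeGroup α)}

theorem lift_of_abelianization_eq_one_of_mem {r : FreeGroup α} (hr : r ∈ rels) :
    FreeGroup.lift (fun a ↦ Abelianization.of (of (rels := rels) a)) r = 1 := by
  have : FreeGroup.lift (fun a ↦ Abelianization.of (of (rels := rels) a)) =
      Abelianization.of.comp (mk rels) := FreeGroup.ext_hom _ _ fun _ ↦ rfl
  rw [this, MonoidHom.comp_apply, one_of_mem hr, map_one]

theorem additive_abelianization_addHom_ext {M : Type*} [AddGroup M]
    {f g : Additive (Abelianization (PresentedGroup rels)) →+ M}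
    (h : ∀ a, f (.ofMul (.of (of a))) = g (.ofMul (.of (of a)))) : f = g :=
  AddMonoidHom.toMultiplicativeRight.injective (Abelianization.hom_ext _ _ (ext h))

end PresentedGroup

namespace M2222

variable {M N : Type*} [AddCommGroup M] [AddCommGroup N] (b : ℤ)

/-- The relators of `rels2222 b` in additive form; the commutator relators hold in any
abelian group. -/
def SatisfiesRels (f : Fin 5 → M) : Prop :=
  (∀ i : Fin 5, i ≠ 4 → f i + f i + f 4 = 0) ∧ f 0 + f 1 + f 2 + f 3 + (-b) • f 4 = 0

theorem satisfiesRels_iff {f : Fin 5 → M} :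
    SatisfiesRels b f ↔
      ∀ r ∈ rels2222 b, FreeGroup.lift (fun i ↦ Multiplicative.ofAdd (f i)) r = 1 := by
  constructor
  · rintro ⟨hsq, hprod⟩ r (⟨i, rfl⟩ | ⟨i, rfl⟩ | rfl) <;>
      simp only [map_mul, map_inv, map_zpow, FreeGroup.lift_apply_of, ← ofAdd_add, ← ofAdd_neg,
        ← ofAdd_zsmul, ofAdd_eq_one]
    · abel
    · exact hsq _ i.castSucc_ne_last
    · exact hprod
  · intro h
    refine ⟨fun i hi ↦ ?_, ?_⟩
    · obtain ⟨i, rfl⟩ := Fin.exists_castSucc_eq.2 hi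
      simpa only [map_mul, FreeGroup.lift_apply_of, ← ofAdd_add, ofAdd_eq_one]
        using h _ (Or.inr (Or.inl ⟨i, rfl⟩))
    · simpa only [map_mul, map_zpow, FreeGroup.lift_apply_of, ← ofAdd_add, ← ofAdd_zsmul,
        ofAdd_eq_one] using h _ (Or.inr (Or.inr rfl))

def genImage (x y z : M) : Fin 5 → M :=
  ![z, x + z, y + z, x + y + (-2 * b - 3) • z, (-2 : ℤ) • z]

theorem satisfiesRels_genImage {x y z : M} (hx : (2 : ℤ) • x = 0) (hy : (2 : ℤ) • y = 0)
    (hz : (4 * (b + 2)) • z = 0) : SatisfiesRels b (genImage b x y z) := by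
  refine ⟨fun i hi ↦ ?_, ?_⟩
  · fin_cases i <;> simp only [genImage, Fin.zero_eta, Fin.mk_one, Fin.reduceFinMk,
      Matrix.cons_val_zero, Matrix.cons_val_one, Matrix.cons_val]
    · module
    · linear_combination (norm := module) hx
    · linear_combination (norm := module) hy
    · linear_combination (norm := module) hx + hy - hz
    · exact absurd rfl hi
  · simp only [genImage, Matrix.cons_val]
    linear_combination (norm := module) hx + hy

theorem map_genImage (f : M →+ N) (x y z : M) (i : Fin 5) :
    f (genImage b x y z i) = genImage b (f x) (f y) (f z) i := by
  fin_cases i <;> simp [genImage]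

abbrev Ab := Additive (Abelianization (PresentedGroup (rels2222 b)))

abbrev gen (i : Fin 5) : Ab b := .ofMul (.of (.of i))

theorem satisfiesRels_gen : SatisfiesRels b (gen b) :=
  (satisfiesRels_iff b).2 fun _ hr ↦ PresentedGroup.lift_of_abelianization_eq_one_of_mem hr

theorem two_zsmul_gen_sub_gen_zero {i : Fin 5} (hi : i ≠ 4) :
    (2 : ℤ) • (gen b i - gen b 0) = 0 := by
  obtain ⟨hsq, -⟩ := satisfiesRels_gen b
  linear_combination (norm := module) hsq i hi - hsq 0 (by decide)

theorem zsmul_gen_zero_eq_zero : (4 * (b + 2)) • gen b 0 = 0 := by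
  obtain ⟨hsq, hprod⟩ := satisfiesRels_gen b
  linear_combination (norm := module) (2 * b + 3) • hsq 0 (by decide) + 2 • hprod -
    hsq 1 (by decide) - hsq 2 (by decide) - hsq 3 (by decide)

theorem toNat_zsmul_gen_zero : ((4 * (b + 2)).toNat : ℤ) • gen b 0 = 0 := by
  rcases le_total 0 (4 * (b + 2)) with h | h
  · rw [Int.toNat_of_nonneg h, zsmul_gen_zero_eq_zero]
  · rw [Int.toNat_eq_zero.2 h, Nat.cast_zero, zero_zsmul]

theorem genImage_gen : genImage b (gen b 1 - gen b 0) (gen b 2 - gen b 0) (gen b 0) = gen b := by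
  obtain ⟨hsq, hprod⟩ := satisfiesRels_gen b
  funext i
  fin_cases i <;> simp only [genImage, Fin.zero_eta, Fin.mk_one, Fin.reduceFinMk,
    Matrix.cons_val_zero, Matrix.cons_val_one, Matrix.cons_val]
  · abel
  · abel
  · linear_combination (norm := module)
      hsq 1 (by decide) + hsq 2 (by decide) - (b + 2) • hsq 0 (by decide) - hprod
  · linear_combination (norm := module) -hsq 0 (by decide)

abbrev A := ZMod 2 × ZMod 2 × ZMod (4 * (b + 2)).toNat

noncomputable def toZMod (hb : -2 ≤ b) : Ab b →+ A b :=
  MonoidHom.toAdditiveLeft <| Abelianization.lift <| PresentedGroup.toGroup <|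
    (satisfiesRels_iff b).1 <| satisfiesRels_genImage b (x := ((1, 0, 0) : A b))
      (y := (0, 1, 0)) (z := (0, 0, 1)) (by simp [show (2 : ZMod 2) = 0 from rfl])
      (by simp [show (2 : ZMod 2) = 0 from rfl])
      (by simpa using ZMod.intCast_self_toNat (m := 4 * (b + 2)) (by omega))

theorem toZMod_gen (hb : -2 ≤ b) (i : Fin 5) :
    toZMod b hb (gen b i) = genImage b ((1, 0, 0) : A b) (0, 1, 0) (0, 0, 1) i := by
  simp [toZMod]

noncomputable def ofZMod : A b →+ Ab b :=
  (ZMod.zmultiplesHom 2 (gen b 1 - gen b 0) (two_zsmul_gen_sub_gen_zero b (by decide))).coprod <|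
    (ZMod.zmultiplesHom 2 (gen b 2 - gen b 0) (two_zsmul_gen_sub_gen_zero b (by decide))).coprod <|
      ZMod.zmultiplesHom _ (gen b 0) (toNat_zsmul_gen_zero b)

theorem ofZMod_one_zero_zero : ofZMod b (1, 0, 0) = gen b 1 - gen b 0 := by
  simp [ofZMod, ZMod.zmultiplesHom_one]

theorem ofZMod_zero_one_zero : ofZMod b (0, 1, 0) = gen b 2 - gen b 0 := by
  simp [ofZMod, ZMod.zmultiplesHom_one]

theorem ofZMod_zero_zero_one : ofZMod b (0, 0, 1) = gen b 0 := by
  simp [ofZMod, ZMod.zmultiplesHom_one]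

theorem ofZMod_comp_toZMod (hb : -2 ≤ b) : (ofZMod b).comp (toZMod b hb) = AddMonoidHom.id _ :=
  PresentedGroup.additive_abelianization_addHom_ext fun i ↦ by
    change ofZMod b (toZMod b hb (gen b i)) = gen b i
    rw [toZMod_gen, map_genImage, ofZMod_one_zero_zero, ofZMod_zero_one_zero,
      ofZMod_zero_zero_one, genImage_gen]

theorem toZMod_comp_ofZMod (hb : -2 ≤ b) : (toZMod b hb).comp (ofZMod b) = AddMonoidHom.id _ := by
  refine AddMonoidHom.ext fun ⟨x, y, z⟩ ↦ ?_
  obtain ⟨i, rfl⟩ := ZMod.intCast_surjective x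
  obtain ⟨j, rfl⟩ := ZMod.intCast_surjective y
  obtain ⟨k, rfl⟩ := ZMod.intCast_surjective z
  have hbasis : ((i, j, k) : A b) = i • (1, 0, 0) + j • (0, 1, 0) + k • (0, 0, 1) := by simp
  simp only [AddMonoidHom.comp_apply, AddMonoidHom.id_apply, hbasis, map_add, map_zsmul,
    ofZMod_one_zero_zero, ofZMod_zero_one_zero, ofZMod_zero_zero_one, map_sub, toZMod_gen]
  simp [genImage]

end M2222

open M2222 in
theorem abelianization_M2222 (b : ℤ) (hb : -1 ≤ b) :
    ∃ e : Abelianization (PresentedGroup (rels2222 b)) ≃*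
        Multiplicative (ZMod 2 × ZMod 2 × ZMod (4 * (b + 2)).toNat),
      e (Abelianization.of (PresentedGroup.of 1 * (PresentedGroup.of 0)⁻¹)) =
        Multiplicative.ofAdd (1, 0, 0) ∧
      e (Abelianization.of (PresentedGroup.of 2 * (PresentedGroup.of 0)⁻¹)) =
        Multiplicative.ofAdd (0, 1, 0) ∧
      e (Abelianization.of (PresentedGroup.of 0)) = Multiplicative.ofAdd (0, 0, 1) := by
  have hb' : -2 ≤ b := by omega
  refine ⟨AddEquiv.toMultiplicativeRight <| (toZMod b hb').toAddEquiv (ofZMod b)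
    (ofZMod_comp_toZMod b hb') (toZMod_comp_ofZMod b hb'), ?_, ?_, ?_⟩ <;>
  simp [toZMod_gen, genImage]
end

section
/- Let G be the group with presentation ⟨s₁, s₂, v₁, h | [s₁,h], [s₂,h], s₁²h, s₂²h, v₁hv₁⁻¹h, s₁s₂v₁²h^{-b}⟩ (the fundamental group of M_22(b)) and let φ : G → ℤ/2 be any surjective homomorphism. Then φ(h) = 0 and φ(s₁) = φ(s₂). -/
/-! Modulo squares, `s₁²h` forces `h = 1`; then `s₁s₂v₁²h^{-b}` reduces to `s₁s₂ = 1`, i.e.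
`s₁ = s₂⁻¹ = s₂`. -/

namespace PresentedGroup

variable {α : Type*} {rels : Set (FreeGroup α)}

lemma mk_of (x : α) : mk rels (FreeGroup.of x) = of x := rfl

end PresentedGroup

namespace M22

open PresentedGroup

variable {G : Type*} [Group G] {b : ℤ}

lemma s₁_sq_mul_h : (of 0 * of 0 * of 3 : PresentedGroup (rels22 b)) = 1 := by
  have hr : (FreeGroup.of 0 * .of 0 * .of 3 : FreeGroup (Fin 4)) ∈ rels22 b := by simp [rels22]
  simpa only [map_mul, mk_of] using one_of_mem hr

lemma s₁_mul_s₂_mul_v₁_sq_mul_h_zpow :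
    (of 0 * of 1 * of 2 * of 2 * of 3 ^ (-b) : PresentedGroup (rels22 b)) = 1 := by
  have hr : (FreeGroup.of 0 * .of 1 * .of 2 * .of 2 * .of 3 ^ (-b) : FreeGroup (Fin 4)) ∈
      rels22 b := by simp [rels22]
  simpa only [map_mul, map_zpow, mk_of] using one_of_mem hr

variable (hG : ∀ g : G, g * g = 1) (φ : PresentedGroup (rels22 b) →* G)
include hG

lemma map_h : φ (of 3) = 1 := by
  simpa only [map_mul, hG, one_mul, map_one] using congrArg φ s₁_sq_mul_h

lemma map_s₁_eq_map_s₂ : φ (of 0) = φ (of 1) := by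
  have h := congrArg φ s₁_mul_s₂_mul_v₁_sq_mul_h_zpow
  simp only [map_mul, map_zpow, map_h hG φ, one_zpow, mul_one, mul_assoc, hG, map_one] at h
  rw [eq_inv_of_mul_eq_one_left h, inv_eq_of_mul_eq_one_right (hG _)]

end M22

theorem surj_M22_onto_ZMod2_general (b : ℕ)
    (φ : PresentedGroup (rels22 b) →* Multiplicative (ZMod 2)) :
    φ (PresentedGroup.of 3) = 1 ∧ φ (PresentedGroup.of 0) = φ (PresentedGroup.of 1) := by
  have hsq : ∀ g : Multiplicative (ZMod 2), g * g = 1 := by decide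
  exact ⟨M22.map_h hsq φ, M22.map_s₁_eq_map_s₂ hsq φ⟩

/-- Any surjection `π₁(M_22(b)) ↠ ℤ/2` kills `h` and agrees on `s₁` and `s₂`. -/
theorem surj_M22_onto_ZMod2 (b : ℕ)
    (φ : PresentedGroup (rels22 b) →* Multiplicative (ZMod 2))
    (hφ : Function.Surjective φ) :
    φ (PresentedGroup.of 3) = 1 ∧ φ (PresentedGroup.of 0) = φ (PresentedGroup.of 1) :=
  surj_M22_onto_ZMod2_general b φ
end

section
/- Let G = ⟨v₁, v₂, h | v₁hv₁⁻¹h, v₂hv₂⁻¹h, v₁²v₂²h^{-b}⟩ with b a positive integer, and let φ : G → ℤ/2 be the homomorphism factoring through abelianization sending v₁ + v₂ to 0, v₁ to 1, and h to 0. Then ker φ is isomorphic to ⟨w₁, w₂, k | [w₁,k], [w₂,k], [w₁,w₂]k^{-2b}⟩, the fundamental group of M_T(2b). -/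
/-- Relations of the fundamental group of `M_T(b)`:
generators `w₁ = 0`, `w₂ = 1`, `k = 2`; relations `[w₁,k]`, `[w₂,k]`, `[w₁,w₂]k^{-b}`. -/
def relsT (b : ℤ) : Set (FreeGroup (Fin 3)) :=
  { .of 0 * .of 2 * (.of 0)⁻¹ * (.of 2)⁻¹,
    .of 1 * .of 2 * (.of 1)⁻¹ * (.of 2)⁻¹,
    .of 0 * .of 1 * (.of 0)⁻¹ * (.of 1)⁻¹ * (.of 2) ^ (-b) }

namespace MKAux

open SemidirectProduct Multiplicative

/-! ### A concrete model: `ℤ² ⋊ ℤ` -/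

abbrev N2 : Type := Multiplicative (ℤ × ℤ)

def Aeq (b : ℤ) : (ℤ × ℤ) ≃+ (ℤ × ℤ) where
  toFun x := (-x.1, b * x.1 - x.2)
  invFun x := (-x.1, -(b * x.1) - x.2)
  left_inv x := by ext <;> simp <;> ring
  right_inv x := by ext <;> simp <;> ring
  map_add' x y := by ext <;> simp <;> ring

def A (b : ℤ) : MulAut N2 := AddEquiv.toMultiplicative (Aeq b)

def actA (b : ℤ) : Multiplicative ℤ →* MulAut N2 := zpowersHom _ (A b)

abbrev Cgrp (b : ℤ) := N2 ⋊[actA b] Multiplicative ℤ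

def tC (b : ℤ) : Cgrp b := inr (ofAdd 1)
def sC (b : ℤ) : Cgrp b := inl (ofAdd (1, 0))
def hC (b : ℤ) : Cgrp b := inl (ofAdd (0, 1))
def v2C (b : ℤ) : Cgrp b := (tC b)⁻¹ * sC b

lemma A_apply (b p z : ℤ) : A b (ofAdd (p, z)) = ofAdd (-p, b * p - z) := rfl

lemma Ainv_apply (b p z : ℤ) : (A b)⁻¹ (ofAdd (p, z)) = ofAdd (-p, -(b * p) - z) := rfl

lemma actA_one (b : ℤ) (n : N2) : actA b (ofAdd 1) n = A b n := by simp [actA]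

lemma actA_inv_one (b : ℤ) (n : N2) : (actA b (ofAdd (1:ℤ)))⁻¹ n = (A b)⁻¹ n := by
  simp [actA]

lemma inl_mul (b : ℤ) (x y : ℤ × ℤ) :
    (inl (ofAdd x) : Cgrp b) * inl (ofAdd y) = inl (ofAdd (x + y)) := by
  rw [← map_mul, ← ofAdd_add]

lemma inl_zpow (b : ℤ) (x : ℤ × ℤ) (z : ℤ) :
    (inl (ofAdd x) : Cgrp b) ^ z = inl (ofAdd (z • x)) := by
  rw [← map_zpow, ofAdd_zsmul]

lemma hC_zpow (b z : ℤ) : hC b ^ z = inl (ofAdd (0, z)) := by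
  rw [hC, inl_zpow]; norm_num

lemma sC_zpow (b y : ℤ) : sC b ^ y = inl (ofAdd (y, 0)) := by
  rw [sC, inl_zpow]; norm_num

lemma conj_tC_hC (b : ℤ) : tC b * hC b * (tC b)⁻¹ = (hC b)⁻¹ := by
  have h : tC b * hC b * (tC b)⁻¹ = inl (actA b (ofAdd 1) (ofAdd (0,1))) := by
    rw [inl_aut]; simp [tC, hC]
  rw [h, actA_one, A_apply, hC, ← map_inv, ← ofAdd_neg]
  norm_num

lemma conj_tC_inv_hC (b : ℤ) : (tC b)⁻¹ * hC b * tC b = (hC b)⁻¹ := by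
  have h : (tC b)⁻¹ * hC b * tC b = inl ((actA b (ofAdd (1:ℤ)))⁻¹ (ofAdd (0,1))) := by
    rw [inl_aut_inv]; simp [tC, hC]
  rw [h, actA_inv_one, Ainv_apply, hC, ← map_inv, ← ofAdd_neg]
  norm_num

lemma conj_tC_sC (b : ℤ) : tC b * sC b * (tC b)⁻¹ = inl (ofAdd (-1, b)) := by
  have h : tC b * sC b * (tC b)⁻¹ = inl (actA b (ofAdd 1) (ofAdd (1,0))) := by
    rw [inl_aut]; simp [tC, sC]
  rw [h, actA_one, A_apply]; norm_num

/-! ### The homomorphism from the Klein-side presented group to the model -/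

def fK (b : ℤ) : Fin 3 → Cgrp b
  | 0 => tC b
  | 1 => v2C b
  | 2 => hC b

lemma fK_rels (b : ℤ) : ∀ r ∈ relsK b, FreeGroup.lift (fK b) r = 1 := by
  intro r hr
  have hcomm : sC b * hC b = hC b * sC b := by
    rw [sC, hC, inl_mul, inl_mul, add_comm]
  simp only [relsK, Set.mem_insert_iff, Set.mem_singleton_iff] at hr
  rcases hr with rfl | rfl | rfl <;>
    simp only [map_mul, map_inv, map_zpow, FreeGroup.lift_apply_of]
  · show tC b * hC b * (tC b)⁻¹ * hC b = 1
    rw [conj_tC_hC]; group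
  · show v2C b * hC b * (v2C b)⁻¹ * hC b = 1
    have e1 : v2C b * hC b * (v2C b)⁻¹
        = (tC b)⁻¹ * (sC b * hC b * (sC b)⁻¹) * tC b := by
      rw [v2C]; group
    have e2 : sC b * hC b * (sC b)⁻¹ = hC b := by rw [hcomm]; group
    rw [e1, e2, conj_tC_inv_hC]; group
  · show fK b 0 * fK b 0 * fK b 1 * fK b 1 * fK b 2 ^ (-b) = 1
    show tC b * tC b * v2C b * v2C b * hC b ^ (-b) = 1
    have e1 : tC b * tC b * v2C b * v2C b = tC b * sC b * (tC b)⁻¹ * sC b := by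
      rw [v2C]; group
    rw [e1, conj_tC_sC, hC_zpow, sC, inl_mul, inl_mul]
    norm_num
    exact map_one _

noncomputable def homK (b : ℤ) : PresentedGroup (relsK b) →* Cgrp b :=
  PresentedGroup.toGroup (fK_rels b)

lemma homK_of (b : ℤ) (i : Fin 3) : homK b (.of i) = fK b i :=
  PresentedGroup.toGroup.of (fK_rels b)

/-! ### Relations in the Klein-side presented group -/

section KleinRels

variable (b : ℤ)

local notation "V0" => (PresentedGroup.of 0 : PresentedGroup (relsK b))
local notation "V1" => (PresentedGroup.of 1 : PresentedGroup (relsK b))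
local notation "V2" => (PresentedGroup.of 2 : PresentedGroup (relsK b))

lemma rel_eq_one {α : Type*} {rels : Set (FreeGroup α)} {r : FreeGroup α} (h : r ∈ rels) :
    PresentedGroup.mk rels r = 1 :=
  (QuotientGroup.eq_one_iff _).mpr (Subgroup.subset_normalClosure h)

lemma relK1 : V0 * V2 * V0⁻¹ * V2 = 1 := by
  have := rel_eq_one (rels := relsK b)
    (r := .of 0 * .of 2 * (.of 0)⁻¹ * .of 2) (by simp [relsK])
  simp only [map_mul, map_inv] at this
  exact this

lemma relK2 : V1 * V2 * V1⁻¹ * V2 = 1 := by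
  have := rel_eq_one (rels := relsK b)
    (r := .of 1 * .of 2 * (.of 1)⁻¹ * .of 2) (by simp [relsK])
  simp only [map_mul, map_inv] at this
  exact this

lemma relK3 : V0 * V0 * V1 * V1 = V2 ^ b := by
  have := rel_eq_one (rels := relsK b)
    (r := .of 0 * .of 0 * .of 1 * .of 1 * (.of 2) ^ (-b)) (by simp [relsK])
  simp only [map_mul, map_inv, map_zpow] at this
  have h2 := mul_eq_one_iff_eq_inv.mp this
  rw [zpow_neg, inv_inv] at h2
  exact h2

lemma conj0 : V0 * V2 * V0⁻¹ = V2⁻¹ := by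
  have := relK1 b
  exact mul_eq_one_iff_eq_inv.mp this

lemma conj1 : V1 * V2 * V1⁻¹ = V2⁻¹ := by
  have := relK2 b
  exact mul_eq_one_iff_eq_inv.mp this

lemma conj0z (z : ℤ) : V0 * V2 ^ z * V0⁻¹ = V2 ^ (-z) := by
  rw [← conj_zpow, conj0, inv_zpow']

lemma conj1z (z : ℤ) : V1 * V2 ^ z * V1⁻¹ = V2 ^ (-z) := by
  rw [← conj_zpow, conj1, inv_zpow']

lemma conj0zinv (z : ℤ) : V0⁻¹ * V2 ^ z * V0 = V2 ^ (-z) := by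
  have h := conj0z b (-z)
  rw [neg_neg] at h
  calc V0⁻¹ * V2 ^ z * V0 = V0⁻¹ * (V0 * V2 ^ (-z) * V0⁻¹) * V0 := by rw [h]
    _ = V2 ^ (-z) := by group

end KleinRels

/-! ### The homomorphism from the torus-side presented group -/

section HomT

variable (b : ℤ)

local notation "V0" => (PresentedGroup.of 0 : PresentedGroup (relsK b))
local notation "V1" => (PresentedGroup.of 1 : PresentedGroup (relsK b))
local notation "V2" => (PresentedGroup.of 2 : PresentedGroup (relsK b))

def fT : Fin 3 → PresentedGroup (relsK b)
  | 0 => V0 * V0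
  | 1 => V0 * V1
  | 2 => V2⁻¹

lemma fT_rels : ∀ r ∈ relsT (2 * b), FreeGroup.lift (fT b) r = 1 := by
  intro r hr
  simp only [relsT, Set.mem_insert_iff, Set.mem_singleton_iff] at hr
  rcases hr with rfl | rfl | rfl <;>
    simp only [map_mul, map_inv, map_zpow, FreeGroup.lift_apply_of]
  · show fT b 0 * fT b 2 * (fT b 0)⁻¹ * (fT b 2)⁻¹ = 1
    show (V0 * V0) * V2⁻¹ * (V0 * V0)⁻¹ * (V2⁻¹)⁻¹ = 1
    have c1 : V0 * V2⁻¹ * V0⁻¹ = V2 := by simpa using conj0z b (-1)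
    have e : (V0 * V0) * V2⁻¹ * (V0 * V0)⁻¹ = V2⁻¹ := by
      calc (V0 * V0) * V2⁻¹ * (V0 * V0)⁻¹ = V0 * (V0 * V2⁻¹ * V0⁻¹) * V0⁻¹ := by group
        _ = V0 * V2 * V0⁻¹ := by rw [c1]
        _ = V2⁻¹ := conj0 b
    rw [e]; group
  · show fT b 1 * fT b 2 * (fT b 1)⁻¹ * (fT b 2)⁻¹ = 1
    show (V0 * V1) * V2⁻¹ * (V0 * V1)⁻¹ * (V2⁻¹)⁻¹ = 1
    have c1 : V1 * V2⁻¹ * V1⁻¹ = V2 := by simpa using conj1z b (-1)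
    have e : (V0 * V1) * V2⁻¹ * (V0 * V1)⁻¹ = V2⁻¹ := by
      calc (V0 * V1) * V2⁻¹ * (V0 * V1)⁻¹ = V0 * (V1 * V2⁻¹ * V1⁻¹) * V0⁻¹ := by group
        _ = V0 * V2 * V0⁻¹ := by rw [c1]
        _ = V2⁻¹ := conj0 b
    rw [e]; group
  · show fT b 0 * fT b 1 * (fT b 0)⁻¹ * (fT b 1)⁻¹ * (fT b 2) ^ (-(2*b)) = 1
    show (V0 * V0) * (V0 * V1) * (V0 * V0)⁻¹ * (V0 * V1)⁻¹ * (V2⁻¹) ^ (-(2*b)) = 1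
    have h2 : V0⁻¹ * V0⁻¹ = V1 * V1 * V2 ^ (-b) := by
      rw [zpow_neg, ← relK3]; group
    have key : (V0 * V0) * (V0 * V1) * (V0 * V0)⁻¹ * (V0 * V1)⁻¹ = V2 ^ (-(2*b)) := by
      calc (V0 * V0) * (V0 * V1) * (V0 * V0)⁻¹ * (V0 * V1)⁻¹
          = V0 * (V0 * V0 * V1) * (V0⁻¹ * V0⁻¹) * (V1⁻¹ * V0⁻¹) := by group
        _ = V0 * (V0 * V0 * V1) * (V1 * V1 * V2 ^ (-b)) * (V1⁻¹ * V0⁻¹) := by rw [h2]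
        _ = V0 * (V0 * V0 * V1 * V1) * (V1 * V2 ^ (-b) * V1⁻¹) * V0⁻¹ := by group
        _ = V0 * V2 ^ b * (V1 * V2 ^ (-b) * V1⁻¹) * V0⁻¹ := by rw [relK3]
        _ = V0 * V2 ^ b * V2 ^ b * V0⁻¹ := by rw [conj1z b (-b), neg_neg]
        _ = V0 * V2 ^ (2*b) * V0⁻¹ := by rw [two_mul, zpow_add]; group
        _ = V2 ^ (-(2*b)) := conj0z b _
    rw [key]; group

noncomputable def homT : PresentedGroup (relsT (2 * b)) →* PresentedGroup (relsK b) :=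
  PresentedGroup.toGroup (fT_rels b)

lemma homT_of (i : Fin 3) : homT b (.of i) = fT b i :=
  PresentedGroup.toGroup.of (fT_rels b)

end HomT

/-! ### Normal form in the torus-side presented group -/

section NormalForm

variable (d : ℤ)

local notation "U0" => (PresentedGroup.of 0 : PresentedGroup (relsT d))
local notation "U1" => (PresentedGroup.of 1 : PresentedGroup (relsT d))
local notation "U2" => (PresentedGroup.of 2 : PresentedGroup (relsT d))

lemma relT1 : U0 * U2 * U0⁻¹ * U2⁻¹ = 1 := by
  have := rel_eq_one (rels := relsT d)
    (r := .of 0 * .of 2 * (.of 0)⁻¹ * (.of 2)⁻¹) (by simp [relsT])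
  simp only [map_mul, map_inv] at this
  exact this

lemma relT2 : U1 * U2 * U1⁻¹ * U2⁻¹ = 1 := by
  have := rel_eq_one (rels := relsT d)
    (r := .of 1 * .of 2 * (.of 1)⁻¹ * (.of 2)⁻¹) (by simp [relsT])
  simp only [map_mul, map_inv] at this
  exact this

lemma relT3 : U0 * U1 * U0⁻¹ * U1⁻¹ = U2 ^ d := by
  have := rel_eq_one (rels := relsT d)
    (r := .of 0 * .of 1 * (.of 0)⁻¹ * (.of 1)⁻¹ * (.of 2) ^ (-d)) (by simp [relsT])
  simp only [map_mul, map_inv, map_zpow] at this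
  have h2 := mul_eq_one_iff_eq_inv.mp this
  rw [zpow_neg, inv_inv] at h2
  exact h2

lemma c02 : Commute U0 U2 := by
  have h := mul_eq_one_iff_eq_inv.mp (relT1 d)
  rw [inv_inv] at h
  exact mul_inv_eq_iff_eq_mul.mp h

lemma c12 : Commute U1 U2 := by
  have h := mul_eq_one_iff_eq_inv.mp (relT2 d)
  rw [inv_inv] at h
  exact mul_inv_eq_iff_eq_mul.mp h

lemma cz0 (m x : ℤ) : U2 ^ m * U0 ^ x = U0 ^ x * U2 ^ m :=
  ((c02 d).symm.zpow_zpow m x).eq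

lemma cz1 (m y : ℤ) : U2 ^ m * U1 ^ y = U1 ^ y * U2 ^ m :=
  ((c12 d).symm.zpow_zpow m y).eq

lemma cz0' (m : ℤ) : U2 ^ m * U0 = U0 * U2 ^ m := by
  have := cz0 d m 1; simpa using this

lemma cz0inv (m : ℤ) : U2 ^ m * U0⁻¹ = U0⁻¹ * U2 ^ m := by
  have := cz0 d m (-1); simpa using this

lemma cz1' (m : ℤ) : U2 ^ m * U1 = U1 * U2 ^ m := by
  have := cz1 d m 1; simpa using this

lemma cz1inv (m : ℤ) : U2 ^ m * U1⁻¹ = U1⁻¹ * U2 ^ m := by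
  have := cz1 d m (-1); simpa using this

lemma base10 : U1 * U0 = U0 * U1 * U2 ^ (-d) := by
  have e : U2 ^ (-d) * (U0 * U1) = U1 * U0 := by
    rw [show U0 * U1 = U2 ^ d * (U1 * U0) from by rw [← relT3 d]; group]
    group
  rw [← e, ← mul_assoc, cz0', mul_assoc, cz1']
  group

lemma base10' : U1 * U0⁻¹ = U0⁻¹ * U1 * U2 ^ d := by
  have e : U0 * U1 = U1 * U0 * U2 ^ d := by rw [base10]; group
  calc U1 * U0⁻¹ = U0⁻¹ * (U0 * U1) * U0⁻¹ := by group
    _ = U0⁻¹ * (U1 * U0 * U2 ^ d) * U0⁻¹ := by rw [e]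
    _ = U0⁻¹ * U1 * U0 * (U2 ^ d * U0⁻¹) := by group
    _ = U0⁻¹ * U1 * U0 * (U0⁻¹ * U2 ^ d) := by rw [cz0inv]
    _ = U0⁻¹ * U1 * U2 ^ d := by group

lemma swap1 (x : ℤ) : U1 * U0 ^ x = U0 ^ x * U1 * U2 ^ (-(d*x)) := by
  induction x using Int.induction_on with
  | zero => simp
  | succ i ih =>
      calc U1 * U0 ^ ((i : ℤ) + 1) = (U1 * U0 ^ (i : ℤ)) * U0 := by
            rw [zpow_add_one]; group
        _ = U0 ^ (i : ℤ) * U1 * U2 ^ (-(d*i)) * U0 := by rw [ih]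
        _ = U0 ^ (i : ℤ) * U1 * (U2 ^ (-(d*i)) * U0) := by group
        _ = U0 ^ (i : ℤ) * U1 * (U0 * U2 ^ (-(d*i))) := by rw [cz0']
        _ = U0 ^ (i : ℤ) * (U1 * U0) * U2 ^ (-(d*i)) := by group
        _ = U0 ^ (i : ℤ) * (U0 * U1 * U2 ^ (-d)) * U2 ^ (-(d*i)) := by rw [base10]
        _ = U0 ^ ((i : ℤ) + 1) * U1 * (U2 ^ (-d) * U2 ^ (-(d*i))) := by
            rw [zpow_add_one]; group
        _ = U0 ^ ((i : ℤ) + 1) * U1 * U2 ^ (-(d*((i : ℤ)+1))) := by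
            rw [← zpow_add]; ring_nf
  | pred i ih =>
      calc U1 * U0 ^ (-(i : ℤ) - 1) = (U1 * U0 ^ (-(i : ℤ))) * U0⁻¹ := by
            rw [zpow_sub_one]; group
        _ = U0 ^ (-(i : ℤ)) * U1 * U2 ^ (-(d*(-(i:ℤ)))) * U0⁻¹ := by rw [ih]
        _ = U0 ^ (-(i : ℤ)) * U1 * (U2 ^ (-(d*(-(i:ℤ)))) * U0⁻¹) := by group
        _ = U0 ^ (-(i : ℤ)) * U1 * (U0⁻¹ * U2 ^ (-(d*(-(i:ℤ))))) := by rw [cz0inv]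
        _ = U0 ^ (-(i : ℤ)) * (U1 * U0⁻¹) * U2 ^ (-(d*(-(i:ℤ)))) := by group
        _ = U0 ^ (-(i : ℤ)) * (U0⁻¹ * U1 * U2 ^ d) * U2 ^ (-(d*(-(i:ℤ)))) := by rw [base10']
        _ = U0 ^ (-(i : ℤ) - 1) * U1 * (U2 ^ d * U2 ^ (-(d*(-(i:ℤ))))) := by
            rw [zpow_sub_one]; group
        _ = U0 ^ (-(i : ℤ) - 1) * U1 * U2 ^ (-(d*(-(i:ℤ)-1))) := by
            rw [← zpow_add]; ring_nf

lemma swap1inv (x : ℤ) : U1⁻¹ * U0 ^ x = U0 ^ x * U1⁻¹ * U2 ^ (d*x) := by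
  have h := swap1 d x
  have e : U0 ^ x * U1 = U1 * U0 ^ x * U2 ^ (d*x) := by rw [h]; group
  calc U1⁻¹ * U0 ^ x = U1⁻¹ * (U0 ^ x * U1) * U1⁻¹ := by group
    _ = U1⁻¹ * (U1 * U0 ^ x * U2 ^ (d*x)) * U1⁻¹ := by rw [e]
    _ = U0 ^ x * (U2 ^ (d*x) * U1⁻¹) := by group
    _ = U0 ^ x * (U1⁻¹ * U2 ^ (d*x)) := by rw [cz1inv]
    _ = U0 ^ x * U1⁻¹ * U2 ^ (d*x) := by group

lemma swap (y x : ℤ) : U1 ^ y * U0 ^ x = U0 ^ x * U1 ^ y * U2 ^ (-(d*x*y)) := by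
  induction y using Int.induction_on with
  | zero => simp
  | succ i ih =>
      calc U1 ^ ((i:ℤ)+1) * U0 ^ x = U1 ^ (i:ℤ) * (U1 * U0 ^ x) := by
            rw [zpow_add_one]; group
        _ = U1 ^ (i:ℤ) * (U0 ^ x * U1 * U2 ^ (-(d*x))) := by rw [swap1]
        _ = (U1 ^ (i:ℤ) * U0 ^ x) * U1 * U2 ^ (-(d*x)) := by group
        _ = U0 ^ x * U1 ^ (i:ℤ) * U2 ^ (-(d*x*i)) * U1 * U2 ^ (-(d*x)) := by rw [ih]
        _ = U0 ^ x * U1 ^ (i:ℤ) * (U2 ^ (-(d*x*i)) * U1) * U2 ^ (-(d*x)) := by group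
        _ = U0 ^ x * U1 ^ (i:ℤ) * (U1 * U2 ^ (-(d*x*i))) * U2 ^ (-(d*x)) := by rw [cz1']
        _ = U0 ^ x * (U1 ^ (i:ℤ) * U1) * (U2 ^ (-(d*x*i)) * U2 ^ (-(d*x))) := by group
        _ = U0 ^ x * U1 ^ ((i:ℤ)+1) * U2 ^ (-(d*x*((i:ℤ)+1))) := by
            rw [← zpow_add_one, ← zpow_add]; ring_nf
  | pred i ih =>
      calc U1 ^ (-(i:ℤ)-1) * U0 ^ x = U1 ^ (-(i:ℤ)) * (U1⁻¹ * U0 ^ x) := by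
            rw [zpow_sub_one]; group
        _ = U1 ^ (-(i:ℤ)) * (U0 ^ x * U1⁻¹ * U2 ^ (d*x)) := by rw [swap1inv]
        _ = (U1 ^ (-(i:ℤ)) * U0 ^ x) * U1⁻¹ * U2 ^ (d*x) := by group
        _ = U0 ^ x * U1 ^ (-(i:ℤ)) * U2 ^ (-(d*x*(-(i:ℤ)))) * U1⁻¹ * U2 ^ (d*x) := by rw [ih]
        _ = U0 ^ x * U1 ^ (-(i:ℤ)) * (U2 ^ (-(d*x*(-(i:ℤ)))) * U1⁻¹) * U2 ^ (d*x) := by group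
        _ = U0 ^ x * U1 ^ (-(i:ℤ)) * (U1⁻¹ * U2 ^ (-(d*x*(-(i:ℤ))))) * U2 ^ (d*x) := by
            rw [cz1inv]
        _ = U0 ^ x * (U1 ^ (-(i:ℤ)) * U1⁻¹) * (U2 ^ (-(d*x*(-(i:ℤ)))) * U2 ^ (d*x)) := by group
        _ = U0 ^ x * U1 ^ (-(i:ℤ)-1) * U2 ^ (-(d*x*(-(i:ℤ)-1))) := by
            rw [← zpow_sub_one, ← zpow_add]; ring_nf

lemma normal_form (g : PresentedGroup (relsT d)) :
    ∃ x y z : ℤ, g = U0 ^ x * U1 ^ y * U2 ^ z := by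
  obtain ⟨w, rfl⟩ := PresentedGroup.mk_surjective (relsT d) g
  induction w using FreeGroup.induction_on with
  | C1 => exact ⟨0, 0, 0, by simp⟩
  | of i =>
      fin_cases i
      · exact ⟨1, 0, 0, by simp; rfl⟩
      · exact ⟨0, 1, 0, by simp; rfl⟩
      · exact ⟨0, 0, 1, by simp; rfl⟩
  | inv_of i _ =>
      fin_cases i
      · exact ⟨-1, 0, 0, by simp; rfl⟩
      · exact ⟨0, -1, 0, by simp; rfl⟩
      · exact ⟨0, 0, -1, by simp; rfl⟩
  | mul u v hu hv =>
      obtain ⟨x, y, z, hu⟩ := hu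
      obtain ⟨x', y', z', hv⟩ := hv
      refine ⟨x + x', y + y', z + z' + (-(d * x' * y)), ?_⟩
      rw [map_mul, hu, hv]
      calc (U0 ^ x * U1 ^ y * U2 ^ z) * (U0 ^ x' * U1 ^ y' * U2 ^ z')
          = U0 ^ x * U1 ^ y * ((U2 ^ z * U0 ^ x') * (U1 ^ y' * U2 ^ z')) := by group
        _ = U0 ^ x * U1 ^ y * ((U0 ^ x' * U2 ^ z) * (U1 ^ y' * U2 ^ z')) := by
            rw [cz0 d z x']
        _ = U0 ^ x * (U1 ^ y * U0 ^ x') * ((U2 ^ z * U1 ^ y') * U2 ^ z') := by group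
        _ = U0 ^ x * (U0 ^ x' * U1 ^ y * U2 ^ (-(d*x'*y))) * ((U1 ^ y' * U2 ^ z) * U2 ^ z') := by
            rw [swap d y x', cz1 d z y']
        _ = (U0 ^ x * U0 ^ x') * U1 ^ y * ((U2 ^ (-(d*x'*y)) * U1 ^ y') * (U2 ^ z * U2 ^ z')) := by
            group
        _ = (U0 ^ x * U0 ^ x') * U1 ^ y * ((U1 ^ y' * U2 ^ (-(d*x'*y))) * (U2 ^ z * U2 ^ z')) := by
            rw [cz1 d (-(d*x'*y)) y']
        _ = U0 ^ (x + x') * U1 ^ (y + y') * U2 ^ (z + z' + (-(d * x' * y))) := by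
            rw [zpow_add, zpow_add, zpow_add, zpow_add]; group

end NormalForm

/-! ### Injectivity of `homT` -/

section Injectivity

variable (b : ℤ)

lemma PhiU0 : homK b (homT b (.of 0)) = inr (ofAdd (2:ℤ)) := by
  rw [homT_of]
  show homK b (PresentedGroup.of 0 * PresentedGroup.of 0) = _
  rw [map_mul, homK_of]
  show tC b * tC b = _
  rw [tC, ← map_mul, ← ofAdd_add]
  norm_num

lemma PhiU1 : homK b (homT b (.of 1)) = sC b := by
  rw [homT_of]
  show homK b (PresentedGroup.of 0 * PresentedGroup.of 1) = sC b
  rw [map_mul, homK_of, homK_of]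
  show tC b * v2C b = sC b
  rw [v2C]; group

lemma PhiU2 : homK b (homT b (.of 2)) = (hC b)⁻¹ := by
  rw [homT_of]
  show homK b ((PresentedGroup.of 2)⁻¹) = _
  rw [map_inv, homK_of]
  rfl

lemma homT_injective : Function.Injective (homT b) := by
  have hΦ : Function.Injective ((homK b).comp (homT b)) := by
    rw [injective_iff_map_eq_one]
    intro g hg
    obtain ⟨x, y, z, rfl⟩ := normal_form (2*b) g
    rw [map_mul, map_mul, map_zpow, map_zpow, map_zpow, MonoidHom.comp_apply,
      MonoidHom.comp_apply, MonoidHom.comp_apply, PhiU0, PhiU1, PhiU2] at hg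
    rw [sC_zpow, inv_zpow', hC_zpow, ← map_zpow, mul_assoc, inl_mul] at hg
    have hx : x = 0 := by
      have hr := congrArg SemidirectProduct.rightHom hg
      simp only [map_mul, rightHom_inl, rightHom_inr, map_one, mul_one] at hr
      rw [← ofAdd_zsmul] at hr
      have h0 : x * 2 = 0 := by
        have := ofAdd.injective (a₁ := x • (2:ℤ)) (a₂ := 0) (by simpa using hr)
        simpa [smul_eq_mul] using this
      omega
    subst hx
    rw [zpow_zero, map_one, one_mul] at hg
    rw [← map_one (inl : N2 →* Cgrp b), inl_inj] at hg
    have h0 : ((y, 0) : ℤ × ℤ) + (0, -z) = 0 := by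
      have := ofAdd.injective (a₁ := ((y,0) : ℤ×ℤ) + (0,-z)) (a₂ := 0) (by simpa using hg)
      simpa using this
    rw [Prod.ext_iff] at h0
    simp only [Prod.fst_add, Prod.snd_add] at h0
    obtain ⟨hy, hz⟩ := h0
    have hy' : y = 0 := by simpa using hy
    have hz' : z = 0 := by simp at hz; omega
    subst hy'; subst hz'
    simp
  exact Function.Injective.of_comp hΦ

end Injectivity

/-! ### The range of `homT` -/

section RangeArg

variable (b : ℤ)

local notation "V0" => (PresentedGroup.of 0 : PresentedGroup (relsK b))
local notation "V1" => (PresentedGroup.of 1 : PresentedGroup (relsK b))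
local notation "V2" => (PresentedGroup.of 2 : PresentedGroup (relsK b))

lemma memA : V0 * V0 ∈ (homT b).range := ⟨.of 0, by rw [homT_of]; rfl⟩
lemma memB : V0 * V1 ∈ (homT b).range := ⟨.of 1, by rw [homT_of]; rfl⟩
lemma memCinv : V2⁻¹ ∈ (homT b).range := ⟨.of 2, by rw [homT_of]; rfl⟩

lemma memV2 : V2 ∈ (homT b).range := by
  have := (homT b).range.inv_mem (memCinv b)
  rwa [inv_inv] at this

lemma range_eq_closure :
    (homT b).range = Subgroup.closure ({V0 * V0, V0 * V1, V2⁻¹} :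
      Set (PresentedGroup (relsK b))) := by
  rw [MonoidHom.range_eq_map, ← PresentedGroup.closure_range_of (relsT (2*b)),
    MonoidHom.map_closure]
  congr 1
  ext g
  simp only [Set.mem_image, Set.mem_range, exists_exists_eq_and]
  constructor
  · rintro ⟨i, rfl⟩
    fin_cases i
    · exact Or.inl (by rw [homT_of]; rfl)
    · exact Or.inr (Or.inl (by rw [homT_of]; rfl))
    · exact Or.inr (Or.inr (by rw [homT_of]; rfl))
  · rintro (rfl | rfl | rfl)
    exacts [⟨0, by rw [homT_of]; rfl⟩, ⟨1, by rw [homT_of]; rfl⟩, ⟨2, by rw [homT_of]; rfl⟩]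

lemma stabA : ∀ u ∈ (homT b).range, V0 * u * V0⁻¹ ∈ (homT b).range := by
  have hle : Subgroup.closure ({V0 * V0, V0 * V1, V2⁻¹} : Set (PresentedGroup (relsK b)))
      ≤ Subgroup.comap (MulAut.conj V0).toMonoidHom (homT b).range := by
    rw [Subgroup.closure_le]
    rintro g hg
    simp only [Set.mem_insert_iff, Set.mem_singleton_iff] at hg
    rcases hg with rfl | rfl | rfl <;>
      simp only [SetLike.mem_coe, Subgroup.mem_comap, MulEquiv.coe_toMonoidHom,
        MulAut.conj_apply]
    · rw [show V0 * (V0 * V0) * V0⁻¹ = V0 * V0 from by group]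
      exact memA b
    · rw [show V0 * (V0 * V1) * V0⁻¹ = (V0 * V0 * V1 * V1) * (V0 * V1)⁻¹ from by group,
        relK3 b]
      exact mul_mem ((homT b).range.zpow_mem (memV2 b) b) (inv_mem (memB b))
    · rw [show V0 * V2⁻¹ * V0⁻¹ = V2 from by simpa using conj0z b (-1)]
      exact memV2 b
  intro u hu
  have h2 : u ∈ Subgroup.comap (MulAut.conj V0).toMonoidHom (homT b).range :=
    hle (by rw [← range_eq_closure b]; exact hu)
  simpa only [Subgroup.mem_comap, MulEquiv.coe_toMonoidHom, MulAut.conj_apply] using h2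

lemma stabB : ∀ u ∈ (homT b).range, V0⁻¹ * u * V0 ∈ (homT b).range := by
  have hv : V1 * V1 = V0⁻¹ * V0⁻¹ * V2 ^ b := by rw [← relK3 b]; group
  have key : (V0 * V1) * (V1 * V0) = V2 ^ (-b) := by
    calc (V0 * V1) * (V1 * V0) = V0 * (V1 * V1) * V0 := by group
      _ = V0 * (V0⁻¹ * V0⁻¹ * V2 ^ b) * V0 := by rw [hv]
      _ = V0⁻¹ * V2 ^ b * V0 := by group
      _ = V2 ^ (-b) := conj0zinv b b
  have hBA : V1 * V0 = (V0 * V1)⁻¹ * V2 ^ (-b) := by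
    rw [show V1 * V0 = (V0 * V1)⁻¹ * ((V0 * V1) * (V1 * V0)) from by group, key]
  have hle : Subgroup.closure ({V0 * V0, V0 * V1, V2⁻¹} : Set (PresentedGroup (relsK b)))
      ≤ Subgroup.comap (MulAut.conj V0⁻¹).toMonoidHom (homT b).range := by
    rw [Subgroup.closure_le]
    rintro g hg
    simp only [Set.mem_insert_iff, Set.mem_singleton_iff] at hg
    rcases hg with rfl | rfl | rfl <;>
      simp only [SetLike.mem_coe, Subgroup.mem_comap, MulEquiv.coe_toMonoidHom,
        MulAut.conj_apply, inv_inv]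
    · rw [show V0⁻¹ * (V0 * V0) * V0 = V0 * V0 from by group]
      exact memA b
    · rw [show V0⁻¹ * (V0 * V1) * V0 = V1 * V0 from by group, hBA]
      exact mul_mem (inv_mem (memB b)) ((homT b).range.zpow_mem (memV2 b) (-b))
    · rw [show V0⁻¹ * V2⁻¹ * V0 = V2 from by simpa using conj0zinv b (-1)]
      exact memV2 b
  intro u hu
  have h2 : u ∈ Subgroup.comap (MulAut.conj V0⁻¹).toMonoidHom (homT b).range :=
    hle (by rw [← range_eq_closure b]; exact hu)
  simpa only [Subgroup.mem_comap, MulEquiv.coe_toMonoidHom, MulAut.conj_apply, inv_inv]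
    using h2

/-- The "index two" subgroup `range ∪ V0 · range` as a subgroup. -/
def Tsub : Subgroup (PresentedGroup (relsK b)) where
  carrier := {g | g ∈ (homT b).range ∨ V0⁻¹ * g ∈ (homT b).range}
  one_mem' := Or.inl (one_mem _)
  mul_mem' := by
    rintro a c (ha | ha) (hc | hc)
    · exact Or.inl (mul_mem ha hc)
    · refine Or.inr ?_
      rw [show V0⁻¹ * (a * c) = (V0⁻¹ * a * V0) * (V0⁻¹ * c) from by group]
      exact mul_mem (stabB b a ha) hc
    · refine Or.inr ?_
      rw [show V0⁻¹ * (a * c) = (V0⁻¹ * a) * c from by group]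
      exact mul_mem ha hc
    · refine Or.inl ?_
      rw [show a * c = (V0 * (V0⁻¹ * a) * V0⁻¹) * (V0 * V0) * (V0⁻¹ * c) from by group]
      exact mul_mem (mul_mem (stabA b _ ha) (memA b)) hc
  inv_mem' := by
    rintro a (ha | ha)
    · exact Or.inl (inv_mem ha)
    · refine Or.inr ?_
      rw [show V0⁻¹ * a⁻¹ = (V0⁻¹ * (V0⁻¹ * a)⁻¹ * V0) * (V0 * V0)⁻¹ from by group]
      exact mul_mem (stabB b _ (inv_mem ha)) (inv_mem (memA b))

lemma mem_Tsub (g : PresentedGroup (relsK b)) : g ∈ Tsub b := by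
  refine PresentedGroup.generated_by _ (Tsub b) ?_ g
  intro j
  fin_cases j
  · refine Or.inr ?_
    show V0⁻¹ * V0 ∈ (homT b).range
    rw [inv_mul_cancel]
    exact one_mem _
  · refine Or.inr ?_
    show V0⁻¹ * V1 ∈ (homT b).range
    rw [show V0⁻¹ * V1 = (V0 * V0)⁻¹ * (V0 * V1) from by group]
    exact mul_mem (inv_mem (memA b)) (memB b)
  · exact Or.inl (memV2 b)

end RangeArg

end MKAux

/-- The kernel of the epimorphism `π₁(M_K(b)) ↠ ℤ/2` sending `v₁` and `v₂` to `1`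
(so `v₁ + v₂` to `0`) and `h` to `0` is the fundamental group of `M_T(2b)`. -/
theorem ker_MK_cover_orientation (b : ℕ) (hb : 0 < b)
    (φ : PresentedGroup (relsK b) →* Multiplicative (ZMod 2))
    (h1 : φ (PresentedGroup.of 0) = Multiplicative.ofAdd 1)
    (h2 : φ (PresentedGroup.of 1) = Multiplicative.ofAdd 1)
    (h3 : φ (PresentedGroup.of 2) = 1) :
    Nonempty (φ.ker ≃* PresentedGroup (relsT (2 * b))) := by
  classical
  -- every element of the range is in the kernel
  have hφT : ∀ u ∈ (MKAux.homT (b : ℤ)).range, φ u = 1 := by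
    have hcomp : φ.comp (MKAux.homT (b : ℤ)) = 1 := by
      apply PresentedGroup.ext
      intro i
      fin_cases i
      · rw [MonoidHom.one_apply, MonoidHom.comp_apply, MKAux.homT_of]
        show φ (PresentedGroup.of 0 * PresentedGroup.of 0) = 1
        rw [map_mul, h1]
        decide
      · rw [MonoidHom.one_apply, MonoidHom.comp_apply, MKAux.homT_of]
        show φ (PresentedGroup.of 0 * PresentedGroup.of 1) = 1
        rw [map_mul, h1, h2]
        decide
      · rw [MonoidHom.one_apply, MonoidHom.comp_apply, MKAux.homT_of]
        show φ ((PresentedGroup.of 2)⁻¹) = 1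
        rw [map_inv, h3]
        decide
    rintro u ⟨w, rfl⟩
    calc φ (MKAux.homT (b : ℤ) w) = (φ.comp (MKAux.homT (b : ℤ))) w := rfl
      _ = 1 := by rw [hcomp]; rfl
  have heq : φ.ker = (MKAux.homT (b : ℤ)).range := by
    apply le_antisymm
    · intro g hg
      rcases MKAux.mem_Tsub (b : ℤ) g with h | h
      · exact h
      · exfalso
        have hone : φ ((PresentedGroup.of 0)⁻¹ * g) = 1 := hφT _ h
        rw [map_mul, map_inv, MonoidHom.mem_ker.mp hg, h1, mul_one] at hone
        exact absurd hone (by decide)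
    · intro u hu
      exact MonoidHom.mem_ker.mpr (hφT u hu)
  exact ⟨(MulEquiv.subgroupCongr heq).trans
    (MonoidHom.ofInjective (MKAux.homT_injective (b : ℤ))).symm⟩
end
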